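/- The family of crowns of G equals the family of local maximum independent sets of G if and only if G[N[S]] is a König–Egerváry graph for every local maximum independent set S of G. -/

import Mathlib

/-!
For a local maximum independent set `S` we have `α(G[N[S]]) = |S|` and `|N[S]| = |S| + |N(S)|`,
while `α + μ ≤ |V|` in any graph; so `G[N[S]]` is König–Egerváry exactly when it has a matching
of size `|N(S)|`. A crown provides one. Conversely, since `S` is independent every edge of such a
matching has an endpoint in `N(S)`, and by counting exactly one, so the matching pairs `N(S)`
injectively with vertices of `S`: `S` is a crown. Finally every crown is a local maximum
independent set, its matching injecting `I \ S ⊆ N(S)` into `S \ I` for independent `I ⊆ N[S]`.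
-/

open Finset

variable {V : Type*}

namespace CrownPaper

variable [Fintype V] [DecidableEq V]

/-- The (open) neighborhood of a finite set of vertices. -/
def nbrs (G : SimpleGraph V) [DecidableRel G.Adj] (A : Finset V) : Finset V :=
  univ.filter (fun v => ∃ a ∈ A, G.Adj v a)

/-- The closed neighborhood `N[A] = A ∪ N(A)`. -/
def closedNbrs (G : SimpleGraph V) [DecidableRel G.Adj] (A : Finset V) : Finset V :=
  A ∪ nbrs G A

/-- `S` is an independent set of `G`. -/
def IsIndep (G : SimpleGraph V) (S : Finset V) : Prop :=
  ∀ a ∈ S, ∀ b ∈ S, ¬ G.Adj a b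

/-- The difference `d(S) = |S| - |N(S)|`. -/
def diff (G : SimpleGraph V) [DecidableRel G.Adj] (S : Finset V) : ℤ :=
  (S.card : ℤ) - ((nbrs G S).card : ℤ)

/-- `S` is a critical independent set. -/
def IsCritIndep (G : SimpleGraph V) [DecidableRel G.Adj] (S : Finset V) : Prop :=
  IsIndep G S ∧ ∀ I : Finset V, IsIndep G I → diff G I ≤ diff G S

/-- `S` is a crown: an independent set with a matching from `N(S)` into `S`. -/
def IsCrown (G : SimpleGraph V) [DecidableRel G.Adj] (S : Finset V) : Prop :=
  IsIndep G S ∧ ∃ f : V → V, (∀ v ∈ nbrs G S, f v ∈ S ∧ G.Adj v (f v)) ∧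
    Set.InjOn f (nbrs G S : Set V)

/-- `S` is a local maximum independent set: a maximum independent set of `G[N[S]]`. -/
def IsLocalMaxIndep (G : SimpleGraph V) [DecidableRel G.Adj] (S : Finset V) : Prop :=
  IsIndep G S ∧ ∀ I : Finset V, IsIndep G I → I ⊆ closedNbrs G S → I.card ≤ S.card

/-- The independence number. -/
noncomputable def alpha (G : SimpleGraph V) : ℕ :=
  sSup {n | ∃ S : Finset V, IsIndep G S ∧ S.card = n}

/-- `M` is a matching of `G`, given as a finite set of (ordered) edges. -/
def IsMatching (G : SimpleGraph V) (M : Finset (V × V)) : Prop :=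
  (∀ e ∈ M, G.Adj e.1 e.2) ∧
  ∀ e ∈ M, ∀ e' ∈ M, e ≠ e' →
    e.1 ≠ e'.1 ∧ e.1 ≠ e'.2 ∧ e.2 ≠ e'.1 ∧ e.2 ≠ e'.2

/-- The matching number. -/
noncomputable def mu (G : SimpleGraph V) : ℕ :=
  sSup {n | ∃ M : Finset (V × V), IsMatching G M ∧ M.card = n}

/-- `G` has a perfect matching. -/
def HasPerfectMatching (G : SimpleGraph V) : Prop :=
  ∃ M : Finset (V × V), IsMatching G M ∧ ∀ v : V, ∃ e ∈ M, v = e.1 ∨ v = e.2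

/-- `G` is a König–Egerváry graph: `α(G) + μ(G) = |V(G)|`. -/
def IsKonigEgervary (G : SimpleGraph V) : Prop :=
  alpha G + mu G = Fintype.card V

/-- `G` is bipartite. -/
def IsBipartite (G : SimpleGraph V) : Prop :=
  ∃ X : Set V, ∀ a b : V, G.Adj a b → (a ∈ X ↔ b ∉ X)

end CrownPaper

open CrownPaper

namespace CrownPaper

section General

variable {W : Type*} {H : SimpleGraph W}

lemma IsMatching.eq_of_mem_ends {M : Finset (W × W)} (hM : IsMatching H M) {e e' : W × W}
    (he : e ∈ M) (he' : e' ∈ M) {x : W} (hx : x = e.1 ∨ x = e.2) (hx' : x = e'.1 ∨ x = e'.2) :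
    e = e' := by
  by_contra hne
  obtain ⟨h11, h12, h21, h22⟩ := hM.2 e he e' he' hne
  rcases hx with rfl | rfl <;> rcases hx' with h | h <;> contradiction

lemma IsMatching.injOn_of_mem_ends {M : Finset (W × W)} (hM : IsMatching H M) {g : W × W → W}
    (hg : ∀ e ∈ M, g e = e.1 ∨ g e = e.2) : Set.InjOn g M :=
  fun e he e' he' heq => hM.eq_of_mem_ends he he' (hg e he) (heq ▸ hg e' he')

/-- Choosing for each edge an endpoint outside `A` injects `M` into the complement of `A`. -/
lemma IsMatching.card_add_card_le [Fintype W] [DecidableEq W] {M : Finset (W × W)}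
    {A : Finset W} (hM : IsMatching H M) (hA : IsIndep H A) :
    M.card + A.card ≤ Fintype.card W := by
  let g : W × W → W := fun e => if e.1 ∈ A then e.2 else e.1
  have hmaps : Set.MapsTo g M ↑(univ \ A) := by
    intro e he
    simp only [g, coe_sdiff, coe_univ, Set.mem_sdiff, Set.mem_univ, mem_coe, true_and]
    split_ifs with h1
    · exact fun h2 => hA _ h1 _ h2 (hM.1 e he)
    · exact h1
  have hinj : Set.InjOn g M := hM.injOn_of_mem_ends fun e _ => by
    simp only [g]; split_ifs <;> simp
  have hle := card_le_card_of_injOn g hmaps hinj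
  rw [card_univ_sdiff] at hle
  have := A.card_le_univ
  omega

lemma bddAbove_indep_card [Fintype W] :
    BddAbove {n | ∃ S : Finset W, IsIndep H S ∧ S.card = n} :=
  ⟨Fintype.card W, fun _ ⟨S, _, h⟩ => h ▸ S.card_le_univ⟩

lemma bddAbove_matching_card [Fintype W] :
    BddAbove {n | ∃ M : Finset (W × W), IsMatching H M ∧ M.card = n} :=
  ⟨Fintype.card (W × W), fun _ ⟨M, _, h⟩ => h ▸ M.card_le_univ⟩

lemma IsIndep.card_le_alpha [Fintype W] {A : Finset W} (h : IsIndep H A) : A.card ≤ alpha H :=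
  le_csSup bddAbove_indep_card ⟨A, h, rfl⟩

lemma IsMatching.card_le_mu [Fintype W] {M : Finset (W × W)} (h : IsMatching H M) :
    M.card ≤ mu H :=
  le_csSup bddAbove_matching_card ⟨M, h, rfl⟩

variable (H) in
lemma exists_isIndep_card_eq_alpha [Fintype W] :
    ∃ A : Finset W, IsIndep H A ∧ A.card = alpha H :=
  Nat.sSup_mem (s := {n | ∃ A : Finset W, IsIndep H A ∧ A.card = n}) ⟨0, ∅, by simp [IsIndep]⟩
    bddAbove_indep_card

variable (H) in
lemma exists_isMatching_card_eq_mu [Fintype W] :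
    ∃ M : Finset (W × W), IsMatching H M ∧ M.card = mu H :=
  Nat.sSup_mem (s := {n | ∃ M : Finset (W × W), IsMatching H M ∧ M.card = n})
    ⟨0, ∅, by simp [IsMatching]⟩ bddAbove_matching_card

variable (H) in
lemma alpha_add_mu_le [Fintype W] [DecidableEq W] : alpha H + mu H ≤ Fintype.card W := by
  obtain ⟨A, hA, hAcard⟩ := exists_isIndep_card_eq_alpha H
  obtain ⟨M, hM, hMcard⟩ := exists_isMatching_card_eq_mu H
  rw [← hAcard, ← hMcard, add_comm]
  exact hM.card_add_card_le hA

end General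

section Induce

variable {V : Type*} {G : SimpleGraph V} {s : Finset V}

lemma IsIndep.card_le_alpha_induce {I : Finset V} (hI : IsIndep G I) (hIs : I ⊆ s) :
    I.card ≤ alpha (G.induce (s : Set V)) := by
  classical
  have hcard : (I.subtype (· ∈ (s : Set V))).card = I.card := by
    rw [card_subtype, filter_true_of_mem fun x hx => mem_coe.2 (hIs hx)]
  rw [← hcard]
  exact IsIndep.card_le_alpha fun a ha b hb hab =>
    hI a (mem_subtype.1 ha) b (mem_subtype.1 hb) (SimpleGraph.induce_adj.1 hab)

variable (G s) in
lemma exists_isIndep_subset_card_eq_alpha_induce :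
    ∃ I : Finset V, IsIndep G I ∧ I ⊆ s ∧ I.card = alpha (G.induce (s : Set V)) := by
  obtain ⟨A, hA, hAcard⟩ := exists_isIndep_card_eq_alpha (G.induce (s : Set V))
  refine ⟨A.map (Function.Embedding.subtype _), ?_, ?_, by rw [card_map, hAcard]⟩
  · simp only [IsIndep, mem_map, Function.Embedding.coe_subtype, forall_exists_index, and_imp]
    rintro _ a ha rfl _ b hb rfl
    exact hA a ha b hb
  · intro x hx
    obtain ⟨a, -, rfl⟩ := mem_map.1 hx
    exact a.2

lemma IsMatching.card_le_mu_induce {M : Finset (V × V)} (hM : IsMatching G M)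
    (hMs : ∀ e ∈ M, e.1 ∈ s ∧ e.2 ∈ s) : M.card ≤ mu (G.induce (s : Set V)) := by
  classical
  let val2 : ↥(s : Set V) × ↥(s : Set V) → V × V := Prod.map Subtype.val Subtype.val
  have hval2 : Function.Injective val2 := Subtype.val_injective.prodMap Subtype.val_injective
  have hcard : (M.preimage val2 hval2.injOn).card = M.card := by
    rw [card_preimage, filter_true_of_mem]
    intro e he
    exact ⟨(⟨e.1, (hMs e he).1⟩, ⟨e.2, (hMs e he).2⟩), rfl⟩
  rw [← hcard]
  refine IsMatching.card_le_mu ⟨fun e he => hM.1 _ (mem_preimage.1 he), ?_⟩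
  intro e he e' he' hne
  have hne' : val2 e ≠ val2 e' := hval2.ne hne
  obtain ⟨h11, h12, h21, h22⟩ := hM.2 _ (mem_preimage.1 he) _ (mem_preimage.1 he') hne'
  exact ⟨fun h => h11 (congrArg Subtype.val h), fun h => h12 (congrArg Subtype.val h),
    fun h => h21 (congrArg Subtype.val h), fun h => h22 (congrArg Subtype.val h)⟩

variable (G s) in
lemma exists_isMatching_card_eq_mu_induce :
    ∃ M : Finset (V × V), IsMatching G M ∧ (∀ e ∈ M, e.1 ∈ s ∧ e.2 ∈ s) ∧
      M.card = mu (G.induce (s : Set V)) := by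
  obtain ⟨M, hM, hMcard⟩ := exists_isMatching_card_eq_mu (G.induce (s : Set V))
  let val2 := (Function.Embedding.subtype (· ∈ (s : Set V))).prodMap
    (Function.Embedding.subtype (· ∈ (s : Set V)))
  refine ⟨M.map val2, ?_, ?_, by rw [card_map, hMcard]⟩
  · refine ⟨?_, ?_⟩
    · simp only [mem_map]
      rintro _ ⟨e, he, rfl⟩
      exact hM.1 e he
    · simp only [mem_map]
      rintro _ ⟨e, he, rfl⟩ _ ⟨e', he', rfl⟩ hne
      obtain ⟨h11, h12, h21, h22⟩ := hM.2 e he e' he' fun h => hne (h ▸ rfl)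
      exact ⟨Subtype.val_injective.ne h11, Subtype.val_injective.ne h12,
        Subtype.val_injective.ne h21, Subtype.val_injective.ne h22⟩
  · simp only [mem_map]
    rintro _ ⟨e, -, rfl⟩
    exact ⟨e.1.2, e.2.2⟩

end Induce

section Crown

variable {V : Type*} [Fintype V] {G : SimpleGraph V} [DecidableRel G.Adj] {S : Finset V}

lemma mem_nbrs {A : Finset V} {v : V} : v ∈ nbrs G A ↔ ∃ a ∈ A, G.Adj v a := by
  simp [nbrs]

lemma mem_closedNbrs [DecidableEq V] {v : V} :
    v ∈ closedNbrs G S ↔ v ∈ S ∨ v ∈ nbrs G S :=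
  mem_union

lemma nbrs_subset_closedNbrs [DecidableEq V] : nbrs G S ⊆ closedNbrs G S :=
  subset_union_right

lemma self_subset_closedNbrs [DecidableEq V] : S ⊆ closedNbrs G S :=
  subset_union_left

lemma IsIndep.disjoint_nbrs (hS : IsIndep G S) : Disjoint S (nbrs G S) :=
  disjoint_left.2 fun v hv hvN =>
    let ⟨a, ha, hadj⟩ := mem_nbrs.1 hvN
    hS v hv a ha hadj

lemma IsIndep.card_closedNbrs [DecidableEq V] (hS : IsIndep G S) :
    Fintype.card (closedNbrs G S : Set V) = S.card + (nbrs G S).card :=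
  (Fintype.card_coe _).trans (card_union_of_disjoint hS.disjoint_nbrs)

lemma IsCrown.isLocalMaxIndep [DecidableEq V] (hC : IsCrown G S) : IsLocalMaxIndep G S := by
  obtain ⟨hS, f, hf, hinj⟩ := hC
  refine ⟨hS, fun I hI hIS => ?_⟩
  have hmemN : ∀ b ∈ I \ S, b ∈ nbrs G S := fun b hb =>
    (mem_closedNbrs.1 (hIS (mem_sdiff.1 hb).1)).resolve_left (mem_sdiff.1 hb).2
  have hsdiff : (I \ S).card ≤ (S \ I).card := by
    refine card_le_card_of_injOn f (fun b hb => ?_) (hinj.mono fun b hb => hmemN b hb)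
    obtain ⟨hfS, hadj⟩ := hf b (hmemN b hb)
    exact mem_sdiff.2 ⟨hfS, fun hfI => hI b (mem_sdiff.1 hb).1 (f b) hfI hadj⟩
  have hIsplit := card_inter_add_card_sdiff I S
  have hSsplit := card_inter_add_card_sdiff S I
  rw [inter_comm] at hIsplit
  omega

lemma IsLocalMaxIndep.alpha_induce_eq [DecidableEq V] (hS : IsLocalMaxIndep G S) :
    alpha (G.induce (closedNbrs G S : Set V)) = S.card := by
  refine le_antisymm ?_ (hS.1.card_le_alpha_induce self_subset_closedNbrs)
  obtain ⟨I, hI, hIS, hIcard⟩ := exists_isIndep_subset_card_eq_alpha_induce G (closedNbrs G S)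
  exact hIcard ▸ hS.2 I hI hIS

lemma IsLocalMaxIndep.mu_induce_le [DecidableEq V] (hS : IsLocalMaxIndep G S) :
    mu (G.induce (closedNbrs G S : Set V)) ≤ (nbrs G S).card := by
  have h := alpha_add_mu_le (G.induce (closedNbrs G S : Set V))
  rw [hS.alpha_induce_eq, hS.1.card_closedNbrs] at h
  omega

lemma IsLocalMaxIndep.isKonigEgervary_induce_iff [DecidableEq V] (hS : IsLocalMaxIndep G S) :
    IsKonigEgervary (G.induce (closedNbrs G S : Set V)) ↔
      (nbrs G S).card ≤ mu (G.induce (closedNbrs G S : Set V)) := by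
  have h := hS.mu_induce_le
  rw [IsKonigEgervary, hS.alpha_induce_eq, hS.1.card_closedNbrs]
  omega

lemma IsCrown.card_nbrs_le_mu_induce [DecidableEq V] (hC : IsCrown G S) :
    (nbrs G S).card ≤ mu (G.induce (closedNbrs G S : Set V)) := by
  obtain ⟨hS, f, hf, hinj⟩ := hC
  let M := (nbrs G S).image fun v => (v, f v)
  have hcard : M.card = (nbrs G S).card :=
    card_image_of_injOn fun v _ w _ h => congrArg Prod.fst h
  have hfN : ∀ v ∈ nbrs G S, ∀ w ∈ nbrs G S, f v ≠ w := fun v hv w hw h =>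
    disjoint_left.1 hS.disjoint_nbrs (hf v hv).1 (h ▸ hw)
  have hM : IsMatching G M := by
    refine ⟨?_, ?_⟩
    · simp only [M, mem_image]
      rintro _ ⟨v, hv, rfl⟩
      exact (hf v hv).2
    · simp only [M, mem_image]
      rintro _ ⟨v, hv, rfl⟩ _ ⟨w, hw, rfl⟩ hne
      have hvw : v ≠ w := fun h => hne (h ▸ rfl)
      exact ⟨hvw, (hfN w hw v hv).symm, hfN v hv w hw, fun h => hvw (hinj hv hw h)⟩
  rw [← hcard]
  refine hM.card_le_mu_induce fun e he => ?_
  obtain ⟨v, hv, rfl⟩ := mem_image.1 he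
  exact ⟨nbrs_subset_closedNbrs hv, self_subset_closedNbrs (hf v hv).1⟩

/-- `g e` is an endpoint of `e` in `N(S)` and `o e` the other one. By counting, `g` is onto
`N(S)`, so `o e ∈ N(S)` would make `o e = g e'` a vertex shared by two edges of `M`. -/
lemma IsIndep.isCrown_of_isMatching [DecidableEq V] {M : Finset (V × V)} (hS : IsIndep G S)
    (hM : IsMatching G M) (hMS : ∀ e ∈ M, e.1 ∈ closedNbrs G S ∧ e.2 ∈ closedNbrs G S)
    (hcard : (nbrs G S).card ≤ M.card) : IsCrown G S := by
  let g : V × V → V := fun e => if e.1 ∈ nbrs G S then e.1 else e.2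
  let o : V × V → V := fun e => if e.1 ∈ nbrs G S then e.2 else e.1
  have hg_end : ∀ e ∈ M, g e = e.1 ∨ g e = e.2 := fun e _ => by
    simp only [g]; split_ifs <;> simp
  have ho_end : ∀ e ∈ M, o e = e.1 ∨ o e = e.2 := fun e _ => by
    simp only [o]; split_ifs <;> simp
  have hadj : ∀ e ∈ M, G.Adj (g e) (o e) := fun e he => by
    simp only [g, o]; split_ifs
    exacts [hM.1 e he, (hM.1 e he).symm]
  have hg_mem : ∀ e ∈ M, g e ∈ nbrs G S := fun e he => by
    simp only [g]; split_ifs with h1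
    · exact h1
    · have h1S := (mem_closedNbrs.1 (hMS e he).1).resolve_right h1
      exact (mem_closedNbrs.1 (hMS e he).2).resolve_left fun h2S => hS _ h1S _ h2S (hM.1 e he)
  have hg_inj := hM.injOn_of_mem_ends hg_end
  have hg_surj : ∀ v ∈ nbrs G S, ∃ e ∈ M, g e = v := fun v hv => by
    obtain ⟨e, he, rfl⟩ := surj_on_of_inj_on_of_card_le (fun e _ => g e) hg_mem
      (fun _ _ he he' h => hg_inj he he' h) hcard v hv
    exact ⟨e, he, rfl⟩
  have ho_mem : ∀ e ∈ M, o e ∈ S := fun e he => by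
    have ho_closed : o e ∈ closedNbrs G S := by
      rcases ho_end e he with h | h <;> rw [h]
      exacts [(hMS e he).1, (hMS e he).2]
    refine (mem_closedNbrs.1 ho_closed).resolve_right fun hoN => ?_
    obtain ⟨e', he', hge'⟩ := hg_surj _ hoN
    obtain rfl := hM.eq_of_mem_ends he' he (hge' ▸ hg_end e' he') (ho_end e he)
    exact (hadj e' he).ne hge'
  choose! edge hedge_mem hedge_g using hg_surj
  refine ⟨hS, o ∘ edge, fun v hv => ⟨ho_mem _ (hedge_mem v hv), ?_⟩, fun v hv w hw h => ?_⟩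
  · have h := hadj _ (hedge_mem v hv)
    rwa [hedge_g v hv] at h
  · rw [← hedge_g v hv, ← hedge_g w hw,
      hM.injOn_of_mem_ends ho_end (hedge_mem v hv) (hedge_mem w hw) h]

lemma IsIndep.isCrown_of_card_nbrs_le_mu_induce [DecidableEq V] (hS : IsIndep G S)
    (h : (nbrs G S).card ≤ mu (G.induce (closedNbrs G S : Set V))) : IsCrown G S := by
  obtain ⟨M, hM, hMS, hMcard⟩ := exists_isMatching_card_eq_mu_induce G (closedNbrs G S)
  exact hS.isCrown_of_isMatching hM hMS (hMcard ▸ h)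

end Crown

end CrownPaper

theorem crown_eq_psi_iff (G : SimpleGraph V) [Fintype V] [DecidableEq V]
    [DecidableRel G.Adj] :
    (∀ S : Finset V, IsCrown G S ↔ IsLocalMaxIndep G S) ↔
    (∀ S : Finset V, IsLocalMaxIndep G S →
      IsKonigEgervary (G.induce (↑(closedNbrs G S) : Set V))) := by
  refine ⟨fun h S hS => ?_, fun h S => ⟨IsCrown.isLocalMaxIndep, fun hS => ?_⟩⟩
  · exact hS.isKonigEgervary_induce_iff.2 ((h S).2 hS).card_nbrs_le_mu_induce
  · exact hS.1.isCrown_of_card_nbrs_le_mu_induce (hS.isKonigEgervary_induce_iff.1 (h S hS))
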